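/- Let b ∈ C. Then the entries of Π_{Δ_τ}(b) are nonincreasing; that is, for all 1 ≤ i < j ≤ n, (Π_{Δ_τ}(b))_i ≥ (Π_{Δ_τ}(b))_j. Consequently (combining with nonnegativity of the entries), Π_{Δ_τ}(b) ∈ C. -/

import Mathlib

open Matrix

/-- The vector of absolute values of the entries of `x`, arranged in nonincreasing order. -/
noncomputable def absDesc {n : ℕ} (x : Fin n → ℝ) : Fin n → ℝ :=
  fun i => |x ((Tuple.sort fun j => |x j|) i.rev)|

/-- The ordered weighted ℓ1 (OWL1) norm `κ_λ(x) = ∑ i, λ_i |x|ᵢ↓`. -/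
noncomputable def kappa {n : ℕ} (lam x : Fin n → ℝ) : ℝ :=
  ∑ i, lam i * absDesc x i

/-- The monotone nonnegative cone `C = {x : x₁ ≥ x₂ ≥ … ≥ xₙ ≥ 0}`. -/
def coneC (n : ℕ) : Set (Fin n → ℝ) :=
  {x | (∀ i j : Fin n, i ≤ j → x j ≤ x i) ∧ ∀ i, 0 ≤ x i}

/-- `P` is a signed permutation matrix. -/
def IsSignedPerm {n : ℕ} (P : Matrix (Fin n) (Fin n) ℝ) : Prop :=
  ∃ σ : Equiv.Perm (Fin n), ∃ ε : Fin n → ℝ,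
    (∀ i, ε i = 1 ∨ ε i = -1) ∧ ∀ i j, P i j = if j = σ i then ε i else 0

/-- `p` minimizes `½‖x − b‖²` over `S`. -/
def IsMinimizer {n : ℕ} (S : Set (Fin n → ℝ)) (b p : Fin n → ℝ) : Prop :=
  p ∈ S ∧ ∀ x ∈ S, (1/2) * ∑ i, (p i - b i)^2 ≤ (1/2) * ∑ i, (x i - b i)^2

/-!
The feasible set `{x | κ_λ(x) ≤ τ}` is convex and invariant under permuting the entries and
flipping their signs. For a convex set, any feasible point at least as close to `b` as the
projection `p` equals `p`, since their midpoint would be strictly closer. If `b ∈ C`, swapping two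
entries of `p` that are in the wrong order, or flipping the sign of a negative entry, does not
increase the distance to `b`, so neither can happen.
-/

theorem Fintype.sum_sub_sum_eq_of_eq_off {ι M : Type*} [Fintype ι] [AddCommGroup M]
    (s : Finset ι) {u v : ι → M} (h : ∀ k ∉ s, u k = v k) :
    ∑ k, u k - ∑ k, v k = ∑ k ∈ s, (u k - v k) := by
  rw [← Finset.sum_sub_distrib]
  refine (Finset.sum_subset (Finset.subset_univ s) fun k _ hk => ?_).symm
  rw [h k hk, sub_self]

section Kappa

variable {n : ℕ}

theorem absDesc_antitone (x : Fin n → ℝ) : Antitone (absDesc x) :=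
  fun _ _ hij => Tuple.monotone_sort (fun k => |x k|) (Fin.rev_le_rev.mpr hij)

theorem kappa_eq_sum_mul_abs_comp_perm (lam x : Fin n → ℝ) :
    kappa lam x = ∑ i, lam i * |x ((Fin.revPerm.trans (Tuple.sort fun k => |x k|)) i)| :=
  rfl

theorem sum_mul_abs_comp_perm_le_kappa {lam : Fin n → ℝ}
    (hmono : ∀ i j, i ≤ j → lam j ≤ lam i) (x : Fin n → ℝ) (ρ : Equiv.Perm (Fin n)) :
    ∑ i, lam i * |x (ρ i)| ≤ kappa lam x := by
  set s := Tuple.sort fun k => |x k|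
  set σ : Equiv.Perm (Fin n) := (ρ.trans s.symm).trans Fin.revPerm
  have hσ : ∀ i, |x (ρ i)| = absDesc x (σ i) := fun i => by
    simp [absDesc, σ, s, Fin.revPerm]
  have hmv : Monovary lam (absDesc x) := fun i j h =>
    hmono j i ((absDesc_antitone x).reflect_lt h).le
  simpa only [hσ, smul_eq_mul, kappa] using hmv.sum_smul_comp_perm_le_sum_smul (σ := σ)

theorem kappa_eq_of_abs_eq (lam : Fin n → ℝ) {x y : Fin n → ℝ} (h : ∀ k, |y k| = |x k|) :
    kappa lam y = kappa lam x := by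
  simp only [kappa, absDesc, h]

theorem kappa_comp_perm (lam x : Fin n → ℝ) (σ : Equiv.Perm (Fin n)) :
    kappa lam (x ∘ σ) = kappa lam x := by
  have h := Tuple.comp_perm_comp_sort_eq_comp_sort (f := fun k => |x k|) (σ := σ)
  refine Finset.sum_congr rfl fun i _ => ?_
  simpa [absDesc, Function.comp_def] using congrArg (lam i * ·) (congrFun h i.rev)

theorem convexOn_kappa {lam : Fin n → ℝ} (hmono : ∀ i j, i ≤ j → lam j ≤ lam i)
    (hnonneg : ∀ i, 0 ≤ lam i) : ConvexOn ℝ Set.univ (kappa lam) := by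
  refine ⟨convex_univ, fun x _ y _ a c ha hc _ => ?_⟩
  set ρ := Fin.revPerm.trans (Tuple.sort fun k => |(a • x + c • y) k|)
  calc kappa lam (a • x + c • y) = ∑ i, lam i * |(a • x + c • y) (ρ i)| :=
        kappa_eq_sum_mul_abs_comp_perm lam _
    _ ≤ ∑ i, lam i * (a * |x (ρ i)| + c * |y (ρ i)|) := by
        refine Finset.sum_le_sum fun i _ => mul_le_mul_of_nonneg_left ?_ (hnonneg i)
        simpa [abs_mul, abs_of_nonneg ha, abs_of_nonneg hc] using
          abs_add_le (a * x (ρ i)) (c * y (ρ i))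
    _ = a * ∑ i, lam i * |x (ρ i)| + c * ∑ i, lam i * |y (ρ i)| := by
        simp only [Finset.mul_sum, ← Finset.sum_add_distrib]
        exact Finset.sum_congr rfl fun i _ => by ring
    _ ≤ a • kappa lam x + c • kappa lam y := by
        simp only [smul_eq_mul]
        gcongr <;> exact sum_mul_abs_comp_perm_le_kappa hmono _ ρ

end Kappa

namespace IsMinimizer

variable {n : ℕ} {S : Set (Fin n → ℝ)} {b p : Fin n → ℝ}

theorem eq_of_sum_sq_le (hS : Convex ℝ S) (hp : IsMinimizer S b p) {q : Fin n → ℝ}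
    (hq : q ∈ S) (hle : ∑ i, (q i - b i) ^ 2 ≤ ∑ i, (p i - b i) ^ 2) : q = p := by
  have hm : (1 / 2 : ℝ) • p + (1 / 2 : ℝ) • q ∈ S :=
    hS hp.1 hq (by norm_num) (by norm_num) (by norm_num)
  have hmin := hp.2 _ hm
  -- parallelogram law: the midpoint is closer to `b` by `‖p - q‖² / 4`
  have hmid : ∑ i, (((1 / 2 : ℝ) • p + (1 / 2 : ℝ) • q) i - b i) ^ 2 =
      (∑ i, (p i - b i) ^ 2 + ∑ i, (q i - b i) ^ 2) / 2 - (∑ i, (p i - q i) ^ 2) / 4 := by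
    simp only [Pi.add_apply, Pi.smul_apply, smul_eq_mul, Finset.sum_div, ← Finset.sum_add_distrib,
      ← Finset.sum_sub_distrib]
    exact Finset.sum_congr rfl fun i _ => by ring
  have hzero : ∑ i, (p i - q i) ^ 2 = 0 :=
    le_antisymm (by linarith) (Finset.sum_nonneg fun i _ => sq_nonneg _)
  funext i
  have hi := (Finset.sum_eq_zero_iff_of_nonneg fun i _ => sq_nonneg (p i - q i)).mp hzero i
    (Finset.mem_univ i)
  exact (sub_eq_zero.mp (pow_eq_zero_iff two_ne_zero |>.mp hi)).symm

theorem antitone (hS : Convex ℝ S) (hswap : ∀ x ∈ S, ∀ i j, x ∘ Equiv.swap i j ∈ S)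
    (hb : ∀ i j, i ≤ j → b j ≤ b i) (hp : IsMinimizer S b p) :
    ∀ i j, i ≤ j → p j ≤ p i := by
  intro i j hij
  by_contra! hlt
  have hne : i ≠ j := by rintro rfl; exact hlt.false
  set q := p ∘ Equiv.swap i j
  have hdiff : ∑ k, (q k - b k) ^ 2 - ∑ k, (p k - b k) ^ 2 = 2 * (p i - p j) * (b i - b j) := by
    rw [Fintype.sum_sub_sum_eq_of_eq_off {i, j} fun k hk => ?_, Finset.sum_pair hne]
    · simp only [q, Function.comp_apply, Equiv.swap_apply_left, Equiv.swap_apply_right]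
      ring
    · simp only [Finset.mem_insert, Finset.mem_singleton, not_or] at hk
      simp [q, Equiv.swap_apply_of_ne_of_ne hk.1 hk.2]
  have hqp := hp.eq_of_sum_sq_le hS (hswap p hp.1 i j) (by nlinarith [hb i j hij])
  have : p j = p i := by simpa [q] using congrFun hqp i
  exact hlt.ne this.symm

theorem nonneg (hS : Convex ℝ S) (hneg : ∀ x ∈ S, ∀ i, Function.update x i (-x i) ∈ S)
    (hb : ∀ i, 0 ≤ b i) (hp : IsMinimizer S b p) (i : Fin n) : 0 ≤ p i := by
  by_contra! hlt
  set q := Function.update p i (-p i)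
  have hdiff : ∑ k, (q k - b k) ^ 2 - ∑ k, (p k - b k) ^ 2 = 4 * p i * b i := by
    rw [Fintype.sum_sub_sum_eq_of_eq_off {i} fun k hk => ?_, Finset.sum_singleton]
    · simp only [q, Function.update_self]
      ring
    · simp [q, Function.update_of_ne (Finset.mem_singleton.not.mp hk)]
  have hqp := hp.eq_of_sum_sq_le hS (hneg p hp.1 i) (by nlinarith [hb i])
  have : -p i = p i := by simpa [q] using congrFun hqp i
  linarith

end IsMinimizer

theorem stmt5_general {n : ℕ} (lam : Fin n → ℝ)
    (hmono : ∀ i j : Fin n, i ≤ j → lam j ≤ lam i)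
    (hnonneg : ∀ i, 0 ≤ lam i)
    (τ : ℝ)
    (b : Fin n → ℝ) (hbC : b ∈ coneC n)
    (p : Fin n → ℝ) (hp : IsMinimizer {x | kappa lam x ≤ τ} b p) :
    (∀ i j : Fin n, i < j → p j ≤ p i) ∧ p ∈ coneC n := by
  have hS : Convex ℝ {x | kappa lam x ≤ τ} := by
    simpa using (convexOn_kappa hmono hnonneg).convex_le τ
  have hanti := hp.antitone hS (fun x hx i j => (kappa_comp_perm lam x _).trans_le hx) hbC.1
  have hnn := hp.nonneg hS (fun x hx i => (kappa_eq_of_abs_eq lam fun k => by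
    rcases eq_or_ne k i with rfl | hk <;> simp [*]).trans_le hx) hbC.2
  exact ⟨fun i j hij => hanti i j hij.le, hanti, hnn⟩

/-- for `b ∈ C`, the entries of `Π_{Δ_τ}(b)` are nonincreasing, and
consequently (combining with nonnegativity of the entries) `Π_{Δ_τ}(b) ∈ C`. -/
theorem stmt5 {n : ℕ} (hn : 0 < n) (lam : Fin n → ℝ)
    (hmono : ∀ i j : Fin n, i ≤ j → lam j ≤ lam i)
    (hnonneg : ∀ i, 0 ≤ lam i) (hlam : lam ≠ 0)
    (τ : ℝ) (hτ : 0 < τ)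
    (b : Fin n → ℝ) (hbC : b ∈ coneC n)
    (p : Fin n → ℝ) (hp : IsMinimizer {x | kappa lam x ≤ τ} b p) :
    (∀ i j : Fin n, i < j → p j ≤ p i) ∧ p ∈ coneC n :=
  stmt5_general lam hmono hnonneg τ b hbC p hp
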